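/- Integer value property of the Graev norm: if x ∈ L(X,∗,d) is a linear combination of points of X with integer coefficients, then the infimum defining ‖x‖ (over representations x = Σ λᵢxᵢ, 0 = Σ λᵢyᵢ of Σ|λᵢ|d(xᵢ,yᵢ)) is attained at representations in which all coefficients λᵢ are integers. -/

import Mathlib

open scoped BigOperators

/-- The free real vector space on a pointed metric space `(X, base)`:
the vector space with Hamel basis `X \ {base}` (and `base` serving as zero). -/
def FreeL (X : Type*) [MetricSpace X] (base : X) : Type _ :=
  {x : X // x ≠ base} →₀ ℝ

namespace FreeL

open Classical

variable {X : Type*} [MetricSpace X]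

noncomputable instance (base : X) : AddCommGroup (FreeL X base) :=
  Finsupp.instAddCommGroup

noncomputable instance (base : X) : Module ℝ (FreeL X base) :=
  Finsupp.module _ _

/-- The canonical embedding of `X` into `FreeL X base`, sending `base` to `0`. -/
noncomputable def δ (base : X) (x : X) : FreeL X base :=
  if h : x = base then 0 else Finsupp.single ⟨x, h⟩ 1

/-- A seminorm on the free vector space whose induced distance on `X` is majorized
by the metric `d`. -/
def IsGoodSeminorm (base : X) (p : Seminorm ℝ (FreeL X base)) : Prop :=
  ∀ x y : X, p (δ base x - δ base y) ≤ dist x y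

/-- The largest seminorm on `FreeL X base` whose induced distance on `X` is
majorized by the metric of `X`. -/
noncomputable def freeNorm (base : X) (z : FreeL X base) : ℝ :=
  ⨆ p : {p : Seminorm ℝ (FreeL X base) // IsGoodSeminorm base p}, p.1 z

end FreeL

/-!
After orienting each pair along the sign of its coefficient, a representation of `z` is a flow:
nonnegative weights `wᵢ` on pairs `(uᵢ, vᵢ)` with `∑ wᵢ (uᵢ - vᵢ) = z`, whose cost
`∑ wᵢ d(uᵢ, vᵢ)` is linear in `w`. If `z` has integer coordinates, no point other than `base` is
an end of exactly one pair of non-integral weight; hence these pairs are at least as many as the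
points they touch, while their vectors `uᵢ - vᵢ` span a space of smaller dimension. Moving the
weights along a linear dependency, in the direction that does not increase the cost, until one of
them vanishes makes one more weight integral. An integral flow is a multiset of pairs. By the
triangle inequality, pairs `(a, x), (x, b)` can be shortcut to `(a, b)` when `x` is neither `base`
nor in the support of `z`, so only pairs from a finite set of points matter, and the possible
costs then lie in the additive monoid generated by finitely many distances, which is
well-ordered.
-/

theorem exists_neg_entry_and_sum_mul_nonpos {ι : Type*} [Fintype ι] {s d : ι → ℝ}
    (hd : 0 ≤ d) (hs : s ≠ 0) :
    ∃ t ∈ ({s, -s} : Set (ι → ℝ)), ∑ i, t i * d i ≤ 0 ∧ ∃ i, t i < 0 := by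
  by_cases hpos : 0 ≤ ∑ i, s i * d i ∧ ∃ i, 0 < s i
  · obtain ⟨hsum, i, hi⟩ := hpos
    refine ⟨-s, Or.inr rfl, ?_, i, by simpa using hi⟩
    simpa [Finset.sum_neg_distrib] using hsum
  · refine ⟨s, Or.inl rfl, ?_, ?_⟩
    · by_contra! hsum
      obtain ⟨i, hi⟩ : ∃ i, 0 < s i := by
        by_contra! hle
        exact hsum.not_ge
          (Finset.sum_nonpos fun i _ => mul_nonpos_of_nonpos_of_nonneg (hle i) (hd i))
      exact hpos ⟨hsum.le, i, hi⟩
    · by_contra! hge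
      obtain ⟨i, hi⟩ : ∃ i, s i ≠ 0 := Function.ne_iff.1 hs
      exact hpos ⟨Finset.sum_nonneg fun i _ => mul_nonneg (hge i) (hd i), i, (hge i).lt_of_ne' hi⟩

theorem exists_nonneg_add_smul_apply_eq_zero {ι : Type*} [Fintype ι] {f s : ι → ℝ} (hf : 0 ≤ f)
    (hs : ∃ i, s i < 0) :
    ∃ α : ℝ, 0 ≤ α ∧ 0 ≤ f + α • s ∧ ∃ i, s i < 0 ∧ f i + α * s i = 0 := by
  obtain ⟨i₀, hi₀, hmin⟩ := Finset.exists_min_image {i | s i < 0} (fun i => f i / -s i)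
    (by simpa [Finset.Nonempty] using hs)
  rw [Finset.mem_filter] at hi₀
  have hneg : 0 < -s i₀ := neg_pos.2 hi₀.2
  have hα : 0 ≤ f i₀ / -s i₀ := div_nonneg (hf i₀) hneg.le
  have hzero : f i₀ + f i₀ / -s i₀ * s i₀ = 0 := by
    rw [div_mul_eq_mul_div, div_neg, mul_div_assoc, div_self hi₀.2.ne, mul_one, add_neg_cancel]
  refine ⟨_, hα, fun i => ?_, i₀, hi₀.2, hzero⟩
  simp only [Pi.zero_apply, Pi.add_apply, Pi.smul_apply, smul_eq_mul]
  by_cases hi : s i < 0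
  · have := hmin i (Finset.mem_filter.2 ⟨Finset.mem_univ _, hi⟩)
    rw [le_div_iff₀ (neg_pos.2 hi)] at this
    linarith
  · exact add_nonneg (hf i) (mul_nonneg hα (not_lt.1 hi))

open Finset in
theorem LinearIndepOn.card_lt_card_image_union_image {R M X ι : Type*} [Ring R]
    [StrongRankCondition R] [AddCommGroup M] [Module R M] [DecidableEq X] {φ : X → M}
    {u v : ι → X} {F : Finset ι} (hF : F.Nonempty)
    (hind : LinearIndepOn R (fun i => φ (u i) - φ (v i)) (F : Set ι)) :
    #F < #(F.image u ∪ F.image v) := by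
  classical
  set W := F.image u ∪ F.image v
  obtain ⟨r, hr⟩ : W.Nonempty := (hF.image u).mono subset_union_left
  -- every `φ (u i) - φ (v i)` lies in the span of the `#W - 1` vectors `φ x - φ r`
  set S : Finset M := (W.erase r).image fun x => φ x - φ r
  have hmem : ∀ x ∈ W, φ x - φ r ∈ Submodule.span R (S : Set M) := by
    intro x hx
    by_cases hxr : x = r
    · simp [hxr]
    · exact Submodule.subset_span (mem_coe.2 (mem_image_of_mem _ (mem_erase.2 ⟨hxr, hx⟩)))
  have hle := linearIndependent_le_span_aux' _ hind (S : Set M) (by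
    rintro _ ⟨⟨i, hi⟩, rfl⟩
    simpa using Submodule.sub_mem _ (hmem (u i) (mem_union_left _ (mem_image_of_mem u hi)))
      (hmem (v i) (mem_union_right _ (mem_image_of_mem v hi))))
  simp only [Fintype.card_coe, coe_sort_coe] at hle
  have : #S ≤ #W - 1 := card_image_le.trans (card_erase_of_mem hr).le
  have := card_pos.2 ⟨r, hr⟩
  omega

open Finset in
theorem card_image_union_image_le_of_card_filter_ne_one {X ι : Type*} [DecidableEq X]
    (u v : ι → X) (F : Finset ι) (b : X)
    (hdeg : ∀ x ≠ b, #{i ∈ F | u i = x} + #{i ∈ F | v i = x} ≠ 1) :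
    #(F.image u ∪ F.image v) ≤ #F := by
  set W := F.image u ∪ F.image v
  have hends : ∑ x ∈ W, (#{i ∈ F | u i = x} + #{i ∈ F | v i = x}) = 2 * #F := by
    rw [sum_add_distrib, two_mul]
    congr 1 <;> refine (card_eq_sum_card_fiberwise fun i hi => ?_).symm
    · exact mem_union_left _ (mem_image_of_mem u hi)
    · exact mem_union_right _ (mem_image_of_mem v hi)
  have htwo : ∀ x ∈ W, 2 ≤ #{i ∈ F | u i = x} + #{i ∈ F | v i = x} + if x = b then 1 else 0 := by
    intro x hxW
    have hpos : 0 < #{i ∈ F | u i = x} + #{i ∈ F | v i = x} := by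
      rcases mem_union.1 hxW with hxu | hxv
      · obtain ⟨i, hi, rfl⟩ := mem_image.1 hxu
        have : 0 < #{j ∈ F | u j = u i} := card_pos.2 ⟨i, mem_filter.2 ⟨hi, rfl⟩⟩
        omega
      · obtain ⟨i, hi, rfl⟩ := mem_image.1 hxv
        have : 0 < #{j ∈ F | v j = v i} := card_pos.2 ⟨i, mem_filter.2 ⟨hi, rfl⟩⟩
        omega
    split_ifs with hxb
    · omega
    · have := hdeg x hxb
      omega
  have := card_nsmul_le_sum _ _ _ htwo
  rw [sum_add_distrib, hends, sum_ite_eq'] at this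
  split_ifs at this <;> simp only [smul_eq_mul] at this <;> omega

open Classical in
noncomputable def fracSupport {ι : Type*} [Fintype ι] (f : ι → ℝ) : Finset ι :=
  {i | f i ∉ (Int.castRingHom ℝ).range}

theorem mem_fracSupport {ι : Type*} [Fintype ι] {f : ι → ℝ} {i : ι} :
    i ∈ fracSupport f ↔ f i ∉ (Int.castRingHom ℝ).range := by
  simp [fracSupport]

namespace FreeL

open Classical

variable {X : Type*} [MetricSpace X] {base : X}

noncomputable def coord (base : X) (w : {x : X // x ≠ base}) : FreeL X base →ₗ[ℝ] ℝ :=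
  Finsupp.lapply w

@[simp] theorem δ_base : δ base base = 0 := by simp [δ]

theorem coord_δ (w : {x : X // x ≠ base}) (x : X) :
    coord base w (δ base x) = if x = w then 1 else 0 := by
  by_cases hx : x = base
  · subst hx
    simp [Ne.symm w.2]
  · have hδ : δ base x = (Finsupp.single (⟨x, hx⟩ : {x // x ≠ base}) 1 : FreeL X base) :=
      dif_neg hx
    rw [hδ]
    change Finsupp.single (⟨x, hx⟩ : {x // x ≠ base}) (1 : ℝ) w = _
    rw [Finsupp.single_apply]
    exact if_congr Subtype.ext_iff rfl rfl

def pointedSupport (z : FreeL X base) : Set X :=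
  insert base {x | ∃ h : x ≠ base, coord base ⟨x, h⟩ z ≠ 0}

theorem pointedSupport_finite (z : FreeL X base) : (pointedSupport z).Finite := by
  refine ((Finsupp.support (show {x : X // x ≠ base} →₀ ℝ from z)).finite_toSet.image
    Subtype.val).insert base |>.subset ?_
  rintro x (rfl | ⟨h, hx⟩)
  · exact Set.mem_insert _ _
  · exact Set.mem_insert_of_mem _ ⟨⟨x, h⟩, Finsupp.mem_support_iff.mpr hx, rfl⟩

def HasIntCoords (z : FreeL X base) : Prop :=
  ∀ w, coord base w z ∈ (Int.castRingHom ℝ).range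

open Finset in
theorem not_linearIndepOn_of_card_ends_ne_one {ι : Type*} (u v : ι → X) {F : Finset ι}
    (hF : F.Nonempty) (hdeg : ∀ x ≠ base, #{i ∈ F | u i = x} + #{i ∈ F | v i = x} ≠ 1) :
    ¬LinearIndepOn ℝ (fun i => δ base (u i) - δ base (v i)) (F : Set ι) := fun hind =>
  (hind.card_lt_card_image_union_image hF).not_ge
    (card_image_union_image_le_of_card_filter_ne_one u v F base hdeg)

section Flow

variable {ι : Type*} [Fintype ι]

noncomputable def flow (base : X) (u v : ι → X) : (ι → ℝ) →ₗ[ℝ] FreeL X base :=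
  Fintype.linearCombination ℝ fun i => δ base (u i) - δ base (v i)

noncomputable def flowCost (u v : ι → X) : (ι → ℝ) →ₗ[ℝ] ℝ :=
  Fintype.linearCombination ℝ fun i => dist (u i) (v i)

theorem flow_apply (u v : ι → X) (f : ι → ℝ) :
    flow base u v f = ∑ i, f i • (δ base (u i) - δ base (v i)) :=
  Fintype.linearCombination_apply _ _ _

theorem flowCost_apply (u v : ι → X) (f : ι → ℝ) :
    flowCost u v f = ∑ i, f i * dist (u i) (v i) :=
  Fintype.linearCombination_apply _ _ _

theorem flow_swap (u v : ι → X) (f : ι → ℝ) : flow base v u f = -flow base u v f := by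
  simp only [flow_apply, ← Finset.sum_neg_distrib, ← smul_neg, neg_sub]

theorem coord_flow (w : {x : X // x ≠ base}) (u v : ι → X) (f : ι → ℝ) :
    coord base w (flow base u v f) =
      ∑ i, f i * ((if u i = w then 1 else 0) - (if v i = w then 1 else 0)) := by
  simp [flow_apply, coord_δ]

open Finset in
theorem card_fracSupport_left_ne_one {u v : ι → X} {f : ι → ℝ}
    (hint : HasIntCoords (flow base u v f)) {x : X} (hx : x ≠ base)
    (hv : #{i ∈ fracSupport f | v i = x} = 0) : #{i ∈ fracSupport f | u i = x} ≠ 1 := by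
  intro hu
  obtain ⟨i₀, hi₀⟩ := card_eq_one.1 hu
  have hu' : ∀ i ∈ fracSupport f, u i = x ↔ i = i₀ := fun i hi => by
    simpa [hi] using (Finset.ext_iff.1 hi₀ i).trans mem_singleton
  have hv' : ∀ i ∈ fracSupport f, v i ≠ x := fun i hi hvi => by
    simpa using (card_eq_zero.1 hv ▸ mem_filter.2 ⟨hi, hvi⟩ : i ∈ (∅ : Finset ι))
  have hi₀F : i₀ ∈ fracSupport f := (mem_filter.1 (hi₀ ▸ mem_singleton_self i₀)).1
  set g : ι → ℝ := fun i => f i * ((if u i = x then 1 else 0) - (if v i = x then 1 else 0))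
  have hfrac : ∑ i ∈ fracSupport f, g i = f i₀ := by
    rw [sum_eq_single_of_mem i₀ hi₀F fun i hi hne => by simp [g, hu' i hi, hv' i hi, hne]]
    simp [g, (hu' i₀ hi₀F).2 rfl, hv' i₀ hi₀F]
  have hrest : ∑ i ∈ (fracSupport f)ᶜ, g i ∈ (Int.castRingHom ℝ).range := by
    refine Subring.sum_mem _ fun i hi => Subring.mul_mem _ ?_ ?_
    · simpa [mem_fracSupport] using hi
    · split_ifs <;> simp
  have hsum := sum_add_sum_compl (fracSupport f) g
  rw [hfrac, ← coord_flow ⟨x, hx⟩] at hsum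
  refine mem_fracSupport.1 hi₀F ?_
  rw [eq_sub_of_add_eq hsum]
  exact Subring.sub_mem _ (hint _) hrest

open Finset in
theorem card_fracSupport_ends_ne_one {u v : ι → X} {f : ι → ℝ}
    (hint : HasIntCoords (flow base u v f)) {x : X} (hx : x ≠ base) :
    #{i ∈ fracSupport f | u i = x} + #{i ∈ fracSupport f | v i = x} ≠ 1 := by
  have hint' : HasIntCoords (flow base v u f) := fun w => by
    rw [flow_swap, map_neg]; exact neg_mem (hint w)
  intro h
  rcases Nat.add_eq_one_iff.1 h with ⟨hu, hv⟩ | ⟨hu, hv⟩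
  · exact card_fracSupport_left_ne_one hint' hx hu hv
  · exact card_fracSupport_left_ne_one hint hx hv hu

theorem exists_smaller_fracSupport {u v : ι → X} {f : ι → ℝ} (hf : 0 ≤ f)
    (hint : HasIntCoords (flow base u v f)) (hF : (fracSupport f).Nonempty) :
    ∃ f', 0 ≤ f' ∧ flow base u v f' = flow base u v f ∧ flowCost u v f' ≤ flowCost u v f ∧
      fracSupport f' ⊂ fracSupport f := by
  have hdep := not_linearIndepOn_of_card_ends_ne_one (base := base) u v hF
    fun x hx => card_fracSupport_ends_ne_one hint hx
  obtain ⟨c, hcF, hc0, hcne⟩ := linearDepOn_iff'.1 hdep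
  obtain ⟨s, hs, hsCost, hsNeg⟩ := exists_neg_entry_and_sum_mul_nonpos
    (d := fun i => dist (u i) (v i)) (fun i => dist_nonneg) (s := ⇑c) (by simpa using hcne)
  have hcFlow : flow base u v c = 0 := by
    rwa [flow, ← Finsupp.linearCombination_eq_fintype_linearCombination_apply,
      Finsupp.linearEquivFunOnFinite_symm_coe]
  have hsFlow : flow base u v s = 0 := by
    rcases hs with rfl | rfl
    · exact hcFlow
    · rw [map_neg, hcFlow, neg_zero]
  have hsF : ∀ i ∉ fracSupport f, s i = 0 := by
    intro i hi
    have : c i = 0 := Finsupp.notMem_support_iff.1 fun h => hi (hcF h)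
    rcases hs with rfl | rfl <;> simp [this]
  obtain ⟨α, hα, hf', i₀, hi₀, hfi₀⟩ := exists_nonneg_add_smul_apply_eq_zero hf hsNeg
  refine ⟨f + α • s, hf', by rw [map_add, map_smul, hsFlow, smul_zero, add_zero], ?_, ?_⟩
  · rw [map_add, map_smul, flowCost_apply u v s, smul_eq_mul]
    exact add_le_of_nonpos_right (mul_nonpos_of_nonneg_of_nonpos hα hsCost)
  · refine (Finset.ssubset_iff_of_subset fun i hi => ?_).2 ⟨i₀, ?_, ?_⟩
    · by_contra hiF
      rw [mem_fracSupport, Pi.add_apply, Pi.smul_apply, hsF i hiF, smul_zero, add_zero] at hi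
      exact hiF (mem_fracSupport.2 hi)
    · by_contra hiF
      exact hi₀.ne (hsF i₀ hiF)
    · simp [mem_fracSupport, hfi₀]

theorem exists_nat_flow_le (u v : ι → X) {f : ι → ℝ} (hf : 0 ≤ f)
    (hint : HasIntCoords (flow base u v f)) :
    ∃ g : ι → ℕ, flow base u v (fun i => g i) = flow base u v f ∧
      flowCost u v (fun i => g i) ≤ flowCost u v f := by
  induction hn : (fracSupport f).card using Nat.strong_induction_on generalizing f with
  | _ n ih =>
  rcases (fracSupport f).eq_empty_or_nonempty with hF | hF
  · have hnat : ∀ i, ∃ k : ℕ, (k : ℝ) = f i := fun i => by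
      have hi : i ∉ fracSupport f := by simp [hF]
      obtain ⟨k, hk⟩ := not_not.1 (mt mem_fracSupport.2 hi)
      rw [eq_intCast] at hk
      have hk0 : (0 : ℝ) ≤ k := hk ▸ hf i
      refine ⟨k.toNat, ?_⟩
      rw [← hk, ← Int.cast_natCast, Int.toNat_of_nonneg (Int.cast_nonneg_iff.1 hk0)]
    choose g hg using hnat
    have : (fun i => (g i : ℝ)) = f := funext hg
    exact ⟨g, by rw [this], by rw [this]⟩
  · obtain ⟨f', hf', hflow, hcost, hlt⟩ := exists_smaller_fracSupport hf hint hF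
    obtain ⟨g, hg, hgc⟩ := ih _ (hn ▸ Finset.card_lt_card hlt) hf' (hflow ▸ hint) rfl
    exact ⟨g, hg.trans hflow, hgc.trans hcost⟩

end Flow

section Pairs

noncomputable def sumDiff (base : X) : Multiset (X × X) →+ FreeL X base :=
  Multiset.sumAddMonoidHom.comp (Multiset.mapAddMonoidHom fun p => δ base p.1 - δ base p.2)

noncomputable def sumDist : Multiset (X × X) →+ ℝ :=
  Multiset.sumAddMonoidHom.comp (Multiset.mapAddMonoidHom fun p : X × X => dist p.1 p.2)

theorem sumDiff_apply (L : Multiset (X × X)) :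
    sumDiff base L = (L.map fun p => δ base p.1 - δ base p.2).sum := rfl

theorem sumDist_apply (L : Multiset (X × X)) : sumDist L = (L.map fun p => dist p.1 p.2).sum :=
  rfl

@[simp] theorem sumDiff_cons (p : X × X) (L : Multiset (X × X)) :
    sumDiff base (p ::ₘ L) = δ base p.1 - δ base p.2 + sumDiff base L := by
  simp [sumDiff_apply]

@[simp] theorem sumDist_cons (p : X × X) (L : Multiset (X × X)) :
    sumDist (p ::ₘ L) = dist p.1 p.2 + sumDist L := by
  simp [sumDist_apply]

theorem coord_sumDiff (w : {x : X // x ≠ base}) (L : Multiset (X × X)) :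
    coord base w (sumDiff base L) =
      (L.countP (·.1 = (w : X)) : ℝ) - L.countP (·.2 = (w : X)) := by
  induction L using Multiset.induction_on with
  | empty => simp
  | cons p L ih =>
    rw [sumDiff_cons, map_add, ih, map_sub, coord_δ, coord_δ, Multiset.countP_cons,
      Multiset.countP_cons]
    push_cast
    split_ifs <;> ring

theorem exists_shortcut {L : Multiset (X × X)} {x : X} (hp : ∃ p ∈ L, p.1 = x)
    (hq : ∃ q ∈ L, q.2 = x) :
    ∃ L', Multiset.card L' < Multiset.card L ∧ sumDiff base L' = sumDiff base L ∧
      sumDist L' ≤ sumDist L := by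
  obtain ⟨p, hpL, rfl⟩ := hp
  obtain ⟨q, hqL, hq⟩ := hq
  obtain ⟨L₁, rfl⟩ := Multiset.exists_cons_of_mem hpL
  rcases Multiset.mem_cons.1 hqL with rfl | hqL₁
  · refine ⟨L₁, by simp, by simp [hq], ?_⟩
    simp [hq]
  · obtain ⟨R, rfl⟩ := Multiset.exists_cons_of_mem hqL₁
    refine ⟨(q.1, p.2) ::ₘ R, by simp, ?_, ?_⟩
    · simp only [sumDiff_cons, hq]
      abel
    · simp only [sumDist_cons]
      have := dist_triangle q.1 p.1 p.2
      rw [← hq] at this ⊢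
      linarith

theorem exists_fst_eq_and_snd_eq {z : FreeL X base} {L : Multiset (X × X)}
    (hL : sumDiff base L = z) {x : X} (hx : x ∉ pointedSupport z)
    (hend : ∃ p ∈ L, p.1 = x ∨ p.2 = x) : (∃ p ∈ L, p.1 = x) ∧ ∃ q ∈ L, q.2 = x := by
  have hxb : x ≠ base := fun h => hx (by rw [h]; exact Set.mem_insert _ _)
  have hx0 : coord base ⟨x, hxb⟩ z = 0 :=
    not_not.1 fun h => hx (Set.mem_insert_of_mem _ ⟨hxb, h⟩)
  have hcount := coord_sumDiff ⟨x, hxb⟩ L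
  rw [hL, hx0, eq_comm, sub_eq_zero, Nat.cast_inj] at hcount
  dsimp only at hcount
  have hpos : 0 < L.countP (·.1 = x) ∨ 0 < L.countP (·.2 = x) := by
    obtain ⟨p, hp, hp1 | hp2⟩ := hend
    · exact Or.inl (Multiset.countP_pos.2 ⟨p, hp, hp1⟩)
    · exact Or.inr (Multiset.countP_pos.2 ⟨p, hp, hp2⟩)
  exact ⟨Multiset.countP_pos.1 (by omega), Multiset.countP_pos.1 (by omega)⟩

def supportedPairs (z : FreeL X base) : Set (Multiset (X × X)) :=
  {L | sumDiff base L = z ∧ ∀ p ∈ L, p.1 ∈ pointedSupport z ∧ p.2 ∈ pointedSupport z}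

theorem exists_supportedPairs_sumDist_le {z : FreeL X base} {L : Multiset (X × X)}
    (hL : sumDiff base L = z) : ∃ L' ∈ supportedPairs z, sumDist L' ≤ sumDist L := by
  induction hn : Multiset.card L using Nat.strong_induction_on generalizing L with
  | _ n ih =>
  by_cases hsupp : ∀ p ∈ L, p.1 ∈ pointedSupport z ∧ p.2 ∈ pointedSupport z
  · exact ⟨L, ⟨hL, hsupp⟩, le_rfl⟩
  push Not at hsupp
  obtain ⟨p, hp, hbad⟩ := hsupp
  obtain ⟨x, hx, hend⟩ : ∃ x ∉ pointedSupport z, p.1 = x ∨ p.2 = x := by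
    by_cases h1 : p.1 ∈ pointedSupport z
    · exact ⟨p.2, hbad h1, Or.inr rfl⟩
    · exact ⟨p.1, h1, Or.inl rfl⟩
  obtain ⟨hfst, hsnd⟩ := exists_fst_eq_and_snd_eq hL hx ⟨p, hp, hend⟩
  obtain ⟨L₁, hlt, hdiff, hdist⟩ := exists_shortcut (base := base) hfst hsnd
  obtain ⟨L', hL', hle⟩ := ih _ (hn ▸ hlt) (hdiff.trans hL) rfl
  exact ⟨L', hL', hle.trans hdist⟩

theorem isWF_sumDist_image_supportedPairs (z : FreeL X base) :
    (sumDist '' supportedPairs z).IsWF := by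
  set D := (fun p : X × X => dist p.1 p.2) '' (pointedSupport z ×ˢ pointedSupport z)
  have hD : D.IsPWO :=
    (((pointedSupport_finite z).prod (pointedSupport_finite z)).image _).isPWO
  refine ((hD.addSubmonoid_closure ?_).mono ?_).isWF
  · rintro _ ⟨p, -, rfl⟩
    exact dist_nonneg
  · rintro _ ⟨L, ⟨-, hL⟩, rfl⟩
    refine AddSubmonoid.multiset_sum_mem _ _ fun d hd => AddSubmonoid.subset_closure ?_
    obtain ⟨p, hp, rfl⟩ := Multiset.mem_map.1 hd
    exact ⟨p, hL p hp, rfl⟩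

theorem exists_forall_mem_supportedPairs_sumDist_le {z : FreeL X base}
    (hne : (supportedPairs z).Nonempty) :
    ∃ L ∈ supportedPairs z, ∀ L' ∈ supportedPairs z, sumDist L ≤ sumDist L' := by
  have hwf := isWF_sumDist_image_supportedPairs z
  obtain ⟨L, hL, hmin⟩ := hwf.min_mem (hne.image _)
  exact ⟨L, hL, fun L' hL' => hmin ▸ hwf.min_le (hne.image _) ⟨L', hL', rfl⟩⟩

end Pairs

section Representations

variable {ι : Type*} [Fintype ι]

theorem hasIntCoords_sum_intCast_smul (c : ι → ℤ) (xs : ι → X) :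
    HasIntCoords (∑ i, (c i : ℝ) • δ base (xs i)) := fun w => by
  simp only [map_sum, map_smul, coord_δ, smul_eq_mul]
  exact Subring.sum_mem _ fun i _ => Subring.mul_mem _ ⟨c i, rfl⟩ (by split_ifs <;> simp)

theorem exists_flow_abs_eq (lam : ι → ℝ) (us vs : ι → X) :
    ∃ u v : ι → X,
      flow base u v (fun i => |lam i|) = ∑ i, lam i • δ base (us i) - ∑ i, lam i • δ base (vs i) ∧
      flowCost u v (fun i => |lam i|) = ∑ i, |lam i| * dist (us i) (vs i) := by
  refine ⟨fun i => if 0 ≤ lam i then us i else vs i, fun i => if 0 ≤ lam i then vs i else us i,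
    ?_, ?_⟩
  · rw [flow_apply, ← Finset.sum_sub_distrib]
    refine Finset.sum_congr rfl fun i _ => ?_
    split_ifs with h
    · rw [abs_of_nonneg h, smul_sub]
    · rw [abs_of_neg (not_le.1 h), neg_smul, smul_sub]
      abel
  · rw [flowCost_apply]
    refine Finset.sum_congr rfl fun i _ => ?_
    split_ifs
    · rfl
    · rw [dist_comm]

theorem exists_pairs_eq_nat_flow (u v : ι → X) (g : ι → ℕ) :
    ∃ L, sumDiff base L = flow base u v (fun i => g i) ∧
      sumDist L = flowCost u v (fun i => g i) := by
  refine ⟨∑ i, Multiset.replicate (g i) (u i, v i), ?_, ?_⟩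
  · simp [map_sum, sumDiff_apply, flow_apply, Multiset.map_replicate, Nat.cast_smul_eq_nsmul]
  · simp [map_sum, sumDist_apply, flowCost_apply, Multiset.map_replicate]

theorem exists_supportedPairs_sumDist_le_of_eq_sum {z : FreeL X base} (hz : HasIntCoords z)
    (lam : ι → ℝ) (us vs : ι → X) (hus : z = ∑ i, lam i • δ base (us i))
    (hvs : (0 : FreeL X base) = ∑ i, lam i • δ base (vs i)) :
    ∃ L ∈ supportedPairs z, sumDist L ≤ ∑ i, |lam i| * dist (us i) (vs i) := by
  obtain ⟨u, v, hflow, hcost⟩ := exists_flow_abs_eq (base := base) lam us vs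
  rw [← hus, ← hvs, sub_zero] at hflow
  obtain ⟨g, hg, hgc⟩ := exists_nat_flow_le u v (fun i => abs_nonneg (lam i)) (hflow ▸ hz)
  obtain ⟨L₀, hL₀, hL₀c⟩ := exists_pairs_eq_nat_flow (base := base) u v g
  obtain ⟨L, hL, hLc⟩ := exists_supportedPairs_sumDist_le (hL₀.trans (hg.trans hflow))
  exact ⟨L, hL, hLc.trans (hL₀c ▸ hcost ▸ hgc)⟩

theorem exists_intCast_eq_sumDiff (L : Multiset (X × X)) :
    ∃ (n : ℕ) (c : Fin n → ℤ) (xs ys : Fin n → X),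
      sumDiff base L = ∑ i, (c i : ℝ) • δ base (xs i) ∧
      (0 : FreeL X base) = ∑ i, (c i : ℝ) • δ base (ys i) ∧
      ∑ i, |(c i : ℝ)| * dist (xs i) (ys i) = sumDist L := by
  obtain ⟨l, rfl⟩ : ∃ l : List (X × X), (l : Multiset (X × X)) = L := ⟨L.toList, L.coe_toList⟩
  -- `∑ (a - b) = ∑ 1 • a + ∑ (-1) • b`, against `0 = ∑ 1 • b + ∑ (-1) • b`
  refine ⟨l.length + l.length, Fin.append (fun _ => 1) (fun _ => -1),
    Fin.append (fun k => l[k].1) (fun k => l[k].2), Fin.append (fun k => l[k].2) (fun k => l[k].2),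
    ?_, ?_, ?_⟩
  all_goals simp only [Fin.sum_univ_add, Fin.append_left, Fin.append_right]
  · rw [sumDiff_apply, Multiset.map_coe, Multiset.sum_coe, ← Fin.sum_univ_fun_getElem]
    simp [sub_eq_add_neg, Finset.sum_add_distrib]
  · simp
  · rw [sumDist_apply, Multiset.map_coe, Multiset.sum_coe, ← Fin.sum_univ_fun_getElem]
    simp

end Representations

end FreeL

open FreeL in
/-- Integer value property of the Graev norm: if `z ∈ L(X)` is an integer
linear combination of points of `X`, then the infimum
`inf {∑ |λᵢ| d(xᵢ,yᵢ) : z = ∑ λᵢxᵢ, 0 = ∑ λᵢyᵢ}` defining the free norm is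
attained at a representation with integer coefficients. -/
theorem graev_norm_integer_value_property
    {X : Type*} [MetricSpace X] (base : X) (z : FreeL X base)
    (hz : ∃ (n : ℕ) (c : Fin n → ℤ) (xs : Fin n → X),
      z = ∑ i, (c i : ℝ) • FreeL.δ base (xs i)) :
    ∃ (n : ℕ) (c : Fin n → ℤ) (xs ys : Fin n → X),
      z = ∑ i, (c i : ℝ) • FreeL.δ base (xs i) ∧
      (0 : FreeL X base) = ∑ i, (c i : ℝ) • FreeL.δ base (ys i) ∧
      (∑ i, |(c i : ℝ)| * dist (xs i) (ys i)) =
        sInf {s : ℝ | ∃ (m : ℕ) (lam : Fin m → ℝ) (us vs : Fin m → X),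
          z = ∑ i, lam i • FreeL.δ base (us i) ∧
          (0 : FreeL X base) = ∑ i, lam i • FreeL.δ base (vs i) ∧
          s = ∑ i, |lam i| * dist (us i) (vs i)} := by
  obtain ⟨n₀, c₀, xs₀, hz₀⟩ := hz
  have hint : HasIntCoords z := hz₀ ▸ hasIntCoords_sum_intCast_smul c₀ xs₀
  obtain ⟨L₀, hL₀, -⟩ := exists_supportedPairs_sumDist_le_of_eq_sum hint _ xs₀ (fun _ => base)
    hz₀ (by simp)
  obtain ⟨L, ⟨hLz, -⟩, hmin⟩ := exists_forall_mem_supportedPairs_sumDist_le ⟨L₀, hL₀⟩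
  obtain ⟨n, c, xs, ys, hxs, hys, hcost⟩ := exists_intCast_eq_sumDiff (base := base) L
  rw [hLz] at hxs
  refine ⟨n, c, xs, ys, hxs, hys, (IsLeast.csInf_eq ⟨?_, ?_⟩).symm⟩
  · exact ⟨n, _, xs, ys, hxs, hys, rfl⟩
  rintro _ ⟨m, lam, us, vs, hus, hvs, rfl⟩
  obtain ⟨L', hL', hL'cost⟩ := exists_supportedPairs_sumDist_le_of_eq_sum hint lam us vs hus hvs
  exact hcost ▸ (hmin L' hL').trans hL'cost
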